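/- There is no total recursive function h : ℕ → ℕ such that for every code e of a total recursive function f : ℕ → ℕ, h(e) is also a code of f and h is extensional (i.e., if e and e' code the same total function then h(e) = h(e')), unless equality of total recursive functions from codes is decidable; in particular, there is no partial recursive function that, given access only to the graph of a total recursive function f (as an oracle returning f(n) on query n, with only finitely many queries made), outputs a code for f. -/

import Mathlib

/-- The `e`-th partial recursive function under a fixed Gödel numbering. -/
def phi (e : ℕ) : ℕ →. ℕ := (Denumerable.ofNat Nat.Partrec.Code e).eval

/-- `e` realizes (is a code of) the total function `f`. -/
def Codes (e : ℕ) (f : ℕ → ℕ) : Prop := ∀ n, phi e n = Part.some (f n)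

/-! An extensional `h` sends codes of the same function to one normal form, so two codes denote
the same function exactly when their `h`-values agree, which is decidable. A continuous code
functional `F` would fix `F f` after finitely many queries to `f`, but a computable function
can still change after any finite set of arguments, and one code cannot realize two
different functions. -/

theorem Codes.unique {e : ℕ} {f g : ℕ → ℕ} (hf : Codes e f) (hg : Codes e g) : f = g :=
  funext fun n => Part.some_injective ((hf n).symm.trans (hg n))

theorem exists_computable_decide_eq_of_extensional_recode (h : ℕ → ℕ) (hc : Computable h)
    (hcode : ∀ (e : ℕ) (f : ℕ → ℕ), Codes e f → Codes (h e) f)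
    (hext : ∀ (e e' : ℕ) (f : ℕ → ℕ), Codes e f → Codes e' f → h e = h e') :
    ∃ d : ℕ → ℕ → Bool, Computable₂ d ∧
      ∀ (e e' : ℕ) (f g : ℕ → ℕ), Codes e f → Codes e' g → (d e e' = true ↔ f = g) := by
  refine ⟨fun e e' => decide (h e = h e'),
    Primrec.eq.decide.to_comp.comp (hc.comp Computable.fst) (hc.comp Computable.snd), ?_⟩
  intro e e' f g hf hg
  rw [decide_eq_true_iff]
  constructor
  · intro heq
    exact (hcode e f hf).unique (heq ▸ hcode e' g hg)
  · rintro rfl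
    exact hext e e' f hf hg

theorem exists_computable_ne_zero_of_forall_mem_eq_zero (s : Finset ℕ) :
    ∃ g : ℕ → ℕ, Computable g ∧ g ≠ 0 ∧ ∀ n ∈ s, g n = 0 := by
  refine ⟨fun n => n - s.sup id, (Primrec.nat_sub.comp Primrec.id (Primrec.const _)).to_comp,
    fun hg => ?_, fun n hn => Nat.sub_eq_zero_of_le (Finset.le_sup (f := id) hn)⟩
  simpa using congrFun hg (s.sup id + 1)

/-- There is no total recursive, extensional `h` assigning to each code of a total
recursive function a code of the same function, unless equality of total recursive
functions from codes is decidable; and there is no continuous functional (depending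
on only finitely many values of its input) producing codes of total recursive functions. -/
theorem stmt0 :
    (∀ h : ℕ → ℕ, Computable h →
      (∀ (e : ℕ) (f : ℕ → ℕ), Codes e f → Codes (h e) f) →
      (∀ (e e' : ℕ) (f : ℕ → ℕ), Codes e f → Codes e' f → h e = h e') →
      ∃ d : ℕ → ℕ → Bool, Computable₂ d ∧
        ∀ (e e' : ℕ) (f g : ℕ → ℕ), Codes e f → Codes e' g → (d e e' = true ↔ f = g)) ∧
    ¬ ∃ F : (ℕ → ℕ) → ℕ,
        (∀ f : ℕ → ℕ, ∃ s : Finset ℕ, ∀ g : ℕ → ℕ, (∀ n ∈ s, g n = f n) → F g = F f) ∧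
        (∀ f : ℕ → ℕ, Computable f → Codes (F f) f) := by
  refine ⟨exists_computable_decide_eq_of_extensional_recode, ?_⟩
  rintro ⟨F, hcont, hcode⟩
  obtain ⟨s, hs⟩ := hcont 0
  obtain ⟨g, hgc, hg0, hgs⟩ := exists_computable_ne_zero_of_forall_mem_eq_zero s
  have hFg : Codes (F g) 0 := hs g hgs ▸ hcode 0 (Computable.const 0)
  exact hg0 ((hcode g hgc).unique hFg)
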